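/- arXiv:1603.05433 — 3 statements merged into one kernel-verified Lean document; each statement's English description precedes it below -/
import Mathlib

section
/- Let n, m be natural numbers, 0 ≤ h ≤ m, and let P(u) = Σ_{i=0}^{n} pᵢ Bⁿᵢ(u) with real coefficients pᵢ. Then ∫₀¹ P(u) Bᵐ_h(u) du = (n+m+1)^{-1} C(m,h) Σ_{i=0}^{n} C(n,i) C(n+m,i+h)^{-1} pᵢ. -/
open Finset intervalIntegral

/-- The Bernstein basis polynomial `B^n_j(u) = C(n,j) u^j (1-u)^(n-j)`. -/
noncomputable def bern (n j : ℕ) (u : ℝ) : ℝ := (n.choose j : ℝ) * u ^ j * (1 - u) ^ (n - j)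

/-!
The product `Bⁿᵢ · Bᵐₕ` is the Bernstein polynomial `Bⁿ⁺ᵐᵢ₊ₕ` rescaled by `C(n,i) C(m,h) / C(n+m,i+h)`,
and every Bernstein polynomial of degree `N` has integral `1/(N+1)` over `[0,1]` by the Beta integral
`∫₀¹ uᵃ (1-u)ᵇ du = a! b! / (a+b+1)!`.
-/

open Nat in
theorem integral_pow_mul_one_sub_pow (a b : ℕ) :
    ∫ u in (0:ℝ)..1, u ^ a * (1 - u) ^ b = (a ! * b ! / (a + b + 1)! : ℝ) := by
  have hβ := Complex.betaIntegral_eq_Gamma_mul_div (a + 1) (b + 1)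
    (by simp only [Complex.add_re, Complex.natCast_re, Complex.one_re]; positivity)
    (by simp only [Complex.add_re, Complex.natCast_re, Complex.one_re]; positivity)
  rw [show (a + 1 + (b + 1) : ℂ) = ((a + b + 1 : ℕ) : ℂ) + 1 by push_cast; ring,
    Complex.Gamma_nat_eq_factorial, Complex.Gamma_nat_eq_factorial,
    Complex.Gamma_nat_eq_factorial, Complex.betaIntegral] at hβ
  simp only [add_sub_cancel_right, Complex.cpow_natCast] at hβ
  rw [← Complex.ofReal_inj, ← integral_ofReal]
  push_cast
  exact hβ

open Nat in
theorem integral_bern {n j : ℕ} (hj : j ≤ n) : ∫ u in (0:ℝ)..1, bern n j u = ((n + 1 : ℕ) : ℝ)⁻¹ := by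
  simp only [bern, mul_assoc, integral_const_mul,
    integral_pow_mul_one_sub_pow, Nat.add_sub_cancel' hj]
  have hchoose : (n.choose j * j ! * (n - j)! : ℝ) = n ! := by
    exact_mod_cast Nat.choose_mul_factorial_mul_factorial hj
  have hpos : (n.choose j : ℝ) ≠ 0 := by exact_mod_cast (Nat.choose_pos hj).ne'
  rw [Nat.factorial_succ, Nat.cast_mul, ← hchoose]
  field_simp

theorem choose_mul_bern_mul_bern {n m i h : ℕ} (hi : i ≤ n) (hh : h ≤ m) (u : ℝ) :
    ((n + m).choose (i + h) : ℝ) * (bern n i u * bern m h u)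
      = n.choose i * m.choose h * bern (n + m) (i + h) u := by
  have hsub : n + m - (i + h) = (n - i) + (m - h) := by omega
  simp only [bern, hsub, pow_add]
  ring

theorem integral_bern_mul_bern {n m i h : ℕ} (hi : i ≤ n) (hh : h ≤ m) :
    ∫ u in (0:ℝ)..1, bern n i u * bern m h u
      = n.choose i * m.choose h / (((n + m + 1 : ℕ) : ℝ) * (n + m).choose (i + h)) := by
  have hchoose : ((n + m).choose (i + h) : ℝ) ≠ 0 := by
    exact_mod_cast (Nat.choose_pos (by omega)).ne'
  have hprod (u : ℝ) : bern n i u * bern m h u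
      = ((n + m).choose (i + h) : ℝ)⁻¹ * (n.choose i * m.choose h * bern (n + m) (i + h) u) := by
    rw [← choose_mul_bern_mul_bern hi hh, inv_mul_cancel_left₀ hchoose]
  simp only [hprod, integral_const_mul, integral_bern (by omega : i + h ≤ n + m)]
  ring

theorem integral_bezier_mul_bernstein (n m h : ℕ) (hh : h ≤ m) (p : ℕ → ℝ) :
    ∫ u in (0:ℝ)..1, (∑ i ∈ range (n + 1), p i * bern n i u) * bern m h u
      = ((n + m + 1 : ℕ) : ℝ)⁻¹ * (m.choose h : ℝ) *
          ∑ i ∈ range (n + 1), (n.choose i : ℝ) * (((n + m).choose (i + h) : ℝ))⁻¹ * p i := by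
  simp only [sum_mul]
  rw [integral_finsetSum fun i _ => by apply Continuous.intervalIntegrable; unfold bern; fun_prop,
    mul_sum]
  refine sum_congr rfl fun i hi => ?_
  simp only [mul_assoc, integral_const_mul,
    integral_bern_mul_bern (mem_range_succ_iff.mp hi) hh]
  ring
end

section
/- Let m, k, l be natural numbers with k + l < m − 1. A real polynomial p of degree at most m belongs to the linear span of {Bᵐ_{k+1}, Bᵐ_{k+2}, …, Bᵐ_{m−l−1}} if and only if p⁽ʲ⁾(0) = 0 for all j = 0,1,…,k and p⁽ʲ⁾(1) = 0 for all j = 0,1,…,l. -/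
open Finset intervalIntegral Polynomial

lemma iter_deriv_add (n : ℕ) (a b : ℝ[X]) :
    Polynomial.derivative^[n] (a + b)
      = Polynomial.derivative^[n] a + Polynomial.derivative^[n] b := by
  induction n generalizing a b with
  | zero => rfl
  | succ n ih => simp [Function.iterate_succ_apply, ih]

lemma iter_deriv_smul (n : ℕ) (a : ℝ) (x : ℝ[X]) :
    Polynomial.derivative^[n] (a • x) = a • Polynomial.derivative^[n] x := by
  induction n generalizing x with
  | zero => rfl
  | succ n ih => simp [Function.iterate_succ_apply, ih]

lemma pow_mem_bernstein_span (m ν : ℕ) (hν : ν ≤ m) :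
    (X : ℝ[X]) ^ ν ∈ Submodule.span ℝ
      (Set.range fun j : Fin (m + 1) => bernsteinPolynomial ℝ m j) := by
  have one_eq : (∑ i ∈ Finset.range (m - ν + 1),
        X ^ i * (1 - X) ^ (m - ν - i) * ((m - ν).choose i : ℝ[X])) = 1 := by
    have h := add_pow (X : ℝ[X]) (1 - X) (m - ν)
    simpa using h.symm
  have key : (X : ℝ[X]) ^ ν =
      ∑ i ∈ Finset.range (m - ν + 1),
        (((m - ν).choose i : ℝ) / (m.choose (ν + i) : ℝ)) • bernsteinPolynomial ℝ m (ν + i) := by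
    conv_lhs => rw [← mul_one ((X : ℝ[X]) ^ ν), ← one_eq, Finset.mul_sum]
    refine Finset.sum_congr rfl fun i hi => ?_
    simp only [Finset.mem_range, Nat.lt_succ_iff] at hi
    have hmi : ν + i ≤ m := by omega
    have hc : ((m.choose (ν + i) : ℝ)) ≠ 0 :=
      Nat.cast_ne_zero.mpr (Nat.choose_pos hmi).ne'
    rw [bernsteinPolynomial, Polynomial.smul_eq_C_mul,
      show m - (ν + i) = m - ν - i from by omega]
    rw [div_eq_mul_inv, map_mul, Polynomial.C_eq_natCast ((m - ν).choose i), pow_add]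
    have hcc : Polynomial.C ((m.choose (ν + i) : ℝ))⁻¹ * ((m.choose (ν + i) : ℕ) : ℝ[X]) = 1 := by
      rw [← Polynomial.C_eq_natCast, ← Polynomial.C_mul, inv_mul_cancel₀ hc, Polynomial.C_1]
    linear_combination (-(((m - ν).choose i : ℕ) : ℝ[X]) * X ^ ν * X ^ i
      * (1 - X) ^ (m - ν - i)) * hcc
  rw [key]
  refine Submodule.sum_smul_mem _ _ fun i hi => ?_
  simp only [Finset.mem_range, Nat.lt_succ_iff] at hi
  exact Submodule.subset_span ⟨⟨ν + i, by omega⟩, rfl⟩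

lemma mem_bernstein_span_of_degree_le (m : ℕ) (p : ℝ[X]) (hdeg : p.degree ≤ m) :
    p ∈ Submodule.span ℝ
      (Set.range fun j : Fin (m + 1) => bernsteinPolynomial ℝ m j) := by
  have hnat : p.natDegree < m + 1 := Nat.lt_succ_of_le (Polynomial.natDegree_le_iff_degree_le.mpr hdeg)
  rw [Polynomial.as_sum_range' p (m + 1) hnat]
  refine Submodule.sum_mem _ fun i hi => ?_
  simp only [Finset.mem_range, Nat.lt_succ_iff] at hi
  rw [← Polynomial.smul_X_eq_monomial]
  exact Submodule.smul_mem _ _ (pow_mem_bernstein_span m i hi)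

theorem mem_constrained_space_iff (m k l : ℕ) (hklm : k + l + 1 < m)
    (p : Polynomial ℝ) (hdeg : p.degree ≤ m) :
    p ∈ Submodule.span ℝ
        ((fun j => bernsteinPolynomial ℝ m j) '' Set.Icc (k + 1) (m - l - 1)) ↔
      (∀ j ≤ k, (Polynomial.derivative^[j] p).eval 0 = 0) ∧
      (∀ j ≤ l, (Polynomial.derivative^[j] p).eval 1 = 0) := by
  constructor
  · intro hp
    refine Submodule.span_induction ?_ ?_ ?_ ?_ hp
    · rintro x ⟨i, ⟨hi1, hi2⟩, rfl⟩
      constructor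
      · intro j hj
        exact bernsteinPolynomial.iterate_derivative_at_0_eq_zero_of_lt ℝ m (by omega)
      · intro j hj
        exact bernsteinPolynomial.iterate_derivative_at_1_eq_zero_of_lt ℝ m (by omega)
    · constructor <;> intro j hj <;> simp
    · rintro x y _ _ ⟨hx0, hx1⟩ ⟨hy0, hy1⟩
      constructor <;> intro j hj
      · rw [iter_deriv_add, Polynomial.eval_add, hx0 j hj, hy0 j hj, add_zero]
      · rw [iter_deriv_add, Polynomial.eval_add, hx1 j hj, hy1 j hj, add_zero]
    · rintro a x _ ⟨hx0, hx1⟩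
      constructor <;> intro j hj
      · rw [iter_deriv_smul, Polynomial.eval_smul, hx0 j hj, smul_zero]
      · rw [iter_deriv_smul, Polynomial.eval_smul, hx1 j hj, smul_zero]
  · rintro ⟨h0, h1⟩
    obtain ⟨c, hp⟩ := Submodule.mem_span_range_iff_exists_fun ℝ |>.mp
      (mem_bernstein_span_of_degree_le m p hdeg)
    have keyD : ∀ n : ℕ,
        Polynomial.derivative^[n] p
          = ∑ i : Fin (m + 1), c i • Polynomial.derivative^[n] (bernsteinPolynomial ℝ m i) := by
      intro n
      rw [← hp]
      simp only [← Module.End.pow_apply, map_sum, map_smul]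
    -- coefficients vanish for low indices
    have hc0 : ∀ n : ℕ, n ≤ k → ∀ j : Fin (m + 1), (j : ℕ) = n → c j = 0 := by
      intro n
      induction n using Nat.strong_induction_on with
      | _ n ih =>
        intro hn j hj
        have h := h0 n hn
        rw [keyD n, Polynomial.eval_finset_sum] at h
        rw [Finset.sum_eq_single_of_mem j (Finset.mem_univ j) ?_] at h
        · have hne : (Polynomial.derivative^[n] (bernsteinPolynomial ℝ m (j : ℕ))).eval 0 ≠ 0 := by
            rw [hj]
            exact bernsteinPolynomial.iterate_derivative_at_0_ne_zero ℝ m n (by omega)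
          simp only [Polynomial.eval_smul, smul_eq_mul] at h
          exact (mul_eq_zero.mp h).resolve_right hne
        · intro i _ hij
          rcases lt_or_gt_of_ne (fun hv : (i : ℕ) = (j : ℕ) => hij (Fin.ext hv)) with hlt | hgt
          · rw [ih (i : ℕ) (by omega) (by omega) i rfl, zero_smul, Polynomial.eval_zero]
          · rw [Polynomial.eval_smul,
              bernsteinPolynomial.iterate_derivative_at_0_eq_zero_of_lt ℝ m (by omega), smul_zero]
    -- coefficients vanish for high indices
    have hc1 : ∀ n : ℕ, n ≤ l → ∀ j : Fin (m + 1), (j : ℕ) = m - n → c j = 0 := by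
      intro n
      induction n using Nat.strong_induction_on with
      | _ n ih =>
        intro hn j hj
        have h := h1 n hn
        rw [keyD n, Polynomial.eval_finset_sum] at h
        rw [Finset.sum_eq_single_of_mem j (Finset.mem_univ j) ?_] at h
        · have hne : (Polynomial.derivative^[n] (bernsteinPolynomial ℝ m (j : ℕ))).eval 1 ≠ 0 := by
            have hz := bernsteinPolynomial.iterate_derivative_at_1_ne_zero ℝ m (m - n) (by omega)
            rw [show m - (m - n) = n from by omega] at hz
            rw [hj]; exact hz
          simp only [Polynomial.eval_smul, smul_eq_mul] at h
          exact (mul_eq_zero.mp h).resolve_right hne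
        · intro i _ hij
          have him : (i : ℕ) ≤ m := by omega
          rcases lt_or_gt_of_ne (fun hv : (i : ℕ) = (j : ℕ) => hij (Fin.ext hv)) with hlt | hgt
          · rw [Polynomial.eval_smul,
              bernsteinPolynomial.iterate_derivative_at_1_eq_zero_of_lt ℝ m (by omega), smul_zero]
          · rw [ih (m - (i : ℕ)) (by omega) (by omega) i (by omega), zero_smul,
              Polynomial.eval_zero]
    -- conclude
    have hrepr : p = ∑ j ∈ Finset.univ.filter
        (fun j : Fin (m + 1) => k + 1 ≤ (j : ℕ) ∧ (j : ℕ) ≤ m - l - 1),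
        c j • bernsteinPolynomial ℝ m (j : ℕ) := by
      rw [← hp, eq_comm]
      refine Finset.sum_filter_of_ne fun j _ hne => ?_
      by_contra hcon
      push_neg at hcon
      rcases Nat.lt_or_ge (j : ℕ) (k + 1) with hlow | hhigh
      · exact hne (by rw [hc0 (j : ℕ) (by omega) j rfl, zero_smul])
      · have : (j : ℕ) > m - l - 1 := by omega
        exact hne (by rw [hc1 (m - (j : ℕ)) (by omega) j (by omega), zero_smul])
    rw [hrepr]
    refine Submodule.sum_smul_mem _ _ fun j hj => ?_
    simp only [Finset.mem_filter] at hj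
    exact Submodule.subset_span ⟨(j : ℕ), ⟨hj.2.1, hj.2.2⟩, rfl⟩
end

section
/- Let n, m, r, d be natural numbers with r ≤ m ≤ n, let p₀,…,pₙ ∈ ℝᵈ and q₀,…,qₘ ∈ ℝᵈ, and set P(u) = Σ_{i=0}^{n} pᵢ Bⁿᵢ(u), Q(u) = Σ_{j=0}^{m} qⱼ Bᵐⱼ(u). Then the derivatives of Q and P agree at u = 0 up to order r, i.e., Q⁽ʲ⁾(0) = P⁽ʲ⁾(0) for j = 0,1,…,r, if and only if for each j = 0,1,…,r: qⱼ = C(n,j) C(m,j)^{-1} Δʲp₀ − Σ_{h=0}^{j−1} (−1)^{j+h} C(j,h) q_h, where Δʲ denotes the iterated forward difference on the control points. -/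
/-! The coefficient of `uʲ` in `Bⁿᵢ` is `C(n,j) (-1)^(j+i) C(j,i)`, so the `j`-th derivative at `0`
of `∑ᵢ Bⁿᵢ(u) pᵢ` is `j! C(n,j) Δʲp₀`. Matching derivatives of order `j ≤ r ≤ m ≤ n` thus says
`C(m,j) Δʲq₀ = C(n,j) Δʲp₀`, and isolating the last term `q_j` of `Δʲq₀` gives the recursion. -/

open Finset intervalIntegral

/-- Iterated forward difference `Δ^j α_k` acting on the indices of control points. -/
noncomputable def fdiffE (d : ℕ) : ℕ → (ℕ → EuclideanSpace ℝ (Fin d)) → ℕ → EuclideanSpace ℝ (Fin d)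
  | 0, w, k => w k
  | j + 1, w, k => fdiffE d j w (k + 1) - fdiffE d j w k

open Polynomial

theorem neg_one_pow_sub_eq_pow_add {R : Type*} [Monoid R] [HasDistribNeg R] {i j : ℕ}
    (h : i ≤ j) : (-1 : R) ^ (j - i) = (-1) ^ (j + i) := by
  rw [show j + i = (j - i) + 2 * i by omega, pow_add, pow_mul]
  simp

theorem Polynomial.coeff_one_sub_X_pow {R : Type*} [CommRing R] (k t : ℕ) :
    ((1 - X : R[X]) ^ k).coeff t = (-1) ^ t * k.choose t := by
  have h (m : ℕ) : (-X : R[X]) ^ m * 1 ^ (k - m) * (k.choose m : R[X])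
      = C ((-1 : R) ^ m * k.choose m) * X ^ m := by
    simp only [neg_pow (X : R[X]), one_pow, mul_one, map_mul, map_pow, map_neg, map_one,
      map_natCast]
    ring
  simp_rw [sub_eq_neg_add, add_pow, h, finsetSum_coeff, coeff_C_mul_X_pow, Finset.sum_ite_eq,
    mem_range]
  split_ifs with ht
  · rfl
  · simp [Nat.choose_eq_zero_of_lt (not_lt.mp ht)]

theorem bernsteinPolynomial.coeff {R : Type*} [CommRing R] (n i j : ℕ) :
    (bernsteinPolynomial R n i).coeff j = n.choose j * ((-1) ^ (j + i) * j.choose i) := by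
  have hb : bernsteinPolynomial R n i = (C (n.choose i : R) * (1 - X) ^ (n - i)) * X ^ i := by
    rw [bernsteinPolynomial, ← C_eq_natCast]; ring
  rw [hb, coeff_mul_X_pow', coeff_C_mul, coeff_one_sub_X_pow]
  split_ifs with hij
  · have hchoose : (n.choose j * j.choose i : R) = n.choose i * (n - i).choose (j - i) := by
      rw [← Nat.cast_mul, ← Nat.cast_mul, Nat.choose_mul hij]
    rw [neg_one_pow_sub_eq_pow_add hij]
    linear_combination (-1 : R) ^ (j + i) * hchoose.symm
  · simp [Nat.choose_eq_zero_of_lt (not_le.mp hij)]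

theorem bernsteinPolynomial.iterate_derivative_eval_zero {R : Type*} [CommRing R] (n i j : ℕ) :
    (derivative^[j] (bernsteinPolynomial R n i)).eval 0
      = j.factorial * n.choose j * ((-1) ^ (j + i) * j.choose i) := by
  rw [← coeff_zero_eq_eval_zero, coeff_iterate_derivative, zero_add, Nat.descFactorial_self,
    nsmul_eq_mul, bernsteinPolynomial.coeff, mul_assoc]

theorem iteratedDeriv_sum_eval_smul {𝕜 E ι : Type*} [NontriviallyNormedField 𝕜]
    [NormedAddCommGroup E] [NormedSpace 𝕜 E] (s : Finset ι) (P : ι → 𝕜[X]) (c : ι → E)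
    (j : ℕ) :
    iteratedDeriv j (fun u => ∑ i ∈ s, (P i).eval u • c i)
      = fun u => ∑ i ∈ s, (derivative^[j] (P i)).eval u • c i := by
  induction j with
  | zero => simp
  | succ j ih =>
    ext u
    rw [iteratedDeriv_succ, ih,
      deriv_fun_sum fun i _ => (Polynomial.differentiableAt _).smul_const _]
    refine Finset.sum_congr rfl fun i _ => ?_
    rw [deriv_smul_const (Polynomial.differentiableAt _), Polynomial.deriv,
      Function.iterate_succ_apply']

theorem bern_eq_eval_bernsteinPolynomial (n i : ℕ) (u : ℝ) :
    bern n i u = (bernsteinPolynomial ℝ n i).eval u := by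
  simp [bern, bernsteinPolynomial]

theorem fdiffE_eq_iterate_fwdDiff (d j : ℕ) (w : ℕ → EuclideanSpace ℝ (Fin d)) :
    fdiffE d j w = (fwdDiff 1)^[j] w := by
  induction j with
  | zero => rfl
  | succ j ih =>
    ext1 k
    rw [Function.iterate_succ_apply', ← ih]
    rfl

theorem fdiffE_eq_sum (d j : ℕ) (w : ℕ → EuclideanSpace ℝ (Fin d)) (k : ℕ) :
    fdiffE d j w k = ∑ i ∈ range (j + 1), ((-1 : ℝ) ^ (j + i) * j.choose i) • w (k + i) := by
  rw [fdiffE_eq_iterate_fwdDiff, fwdDiff_iter_eq_sum_shift]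
  refine Finset.sum_congr rfl fun i hi => ?_
  rw [smul_eq_mul, mul_one, ← Int.cast_smul_eq_zsmul ℝ]
  push_cast
  rw [neg_one_pow_sub_eq_pow_add (Nat.lt_succ_iff.mp (mem_range.mp hi))]

theorem fdiffE_zero_eq_add_sum (d j : ℕ) (w : ℕ → EuclideanSpace ℝ (Fin d)) :
    fdiffE d j w 0 = w j + ∑ h ∈ range j, ((-1 : ℝ) ^ (j + h) * j.choose h) • w h := by
  rw [fdiffE_eq_sum, sum_range_succ, add_comm, ← two_mul, pow_mul]
  simp

theorem iteratedDeriv_bern_sum_zero {d n j : ℕ} (hj : j ≤ n)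
    (w : ℕ → EuclideanSpace ℝ (Fin d)) :
    iteratedDeriv j (fun u => ∑ i ∈ range (n + 1), bern n i u • w i) 0
      = ((j.factorial : ℝ) * n.choose j) • fdiffE d j w 0 := by
  simp only [bern_eq_eval_bernsteinPolynomial, iteratedDeriv_sum_eval_smul,
    bernsteinPolynomial.iterate_derivative_eval_zero, fdiffE_eq_sum, zero_add, smul_sum,
    smul_smul]
  refine (sum_subset (range_subset_range.mpr (by omega)) fun i _ hi => ?_).symm
  rw [Nat.choose_eq_zero_of_lt (show j < i by simpa using hi)]
  simp

theorem mul_smul_eq_mul_smul_iff {K V : Type*} [Field K] [AddCommGroup V] [Module K V]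
    {a b c : K} (ha : a ≠ 0) (hc : c ≠ 0) (x y : V) :
    (a * c) • x = (a * b) • y ↔ x = (b * c⁻¹) • y := by
  rw [mul_smul, mul_smul, smul_right_inj ha, mul_comm, mul_smul, eq_inv_smul_iff₀ hc]

theorem constraints_at_zero_iff (n m r d : ℕ) (hrm : r ≤ m) (hmn : m ≤ n)
    (p q : ℕ → EuclideanSpace ℝ (Fin d)) :
    (∀ j ≤ r,
        iteratedDeriv j (fun u : ℝ => ∑ i ∈ range (m + 1), bern m i u • q i) 0
          = iteratedDeriv j (fun u : ℝ => ∑ i ∈ range (n + 1), bern n i u • p i) 0) ↔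
    (∀ j ≤ r,
        q j = ((n.choose j : ℝ) * ((m.choose j : ℝ))⁻¹) • fdiffE d j p 0
          - ∑ h ∈ range j, ((-1 : ℝ) ^ (j + h) * (j.choose h : ℝ)) • q h) := by
  refine forall₂_congr fun j hj => ?_
  have hjm : j ≤ m := hj.trans hrm
  rw [iteratedDeriv_bern_sum_zero hjm, iteratedDeriv_bern_sum_zero (hjm.trans hmn),
    mul_smul_eq_mul_smul_iff (by positivity) (by exact_mod_cast (Nat.choose_pos hjm).ne'),
    fdiffE_zero_eq_add_sum, eq_sub_iff_add_eq]
end
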